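/- Every β-Hölder domain Ω ⊂ ℝⁿ is a (1/β)-John domain: if there exist x₀ ∈ Ω and C₀ such that the quasihyperbolic distance satisfies k_Ω(x, x₀) ≤ (1/β) log(d(x₀,∂Ω)/d(x,∂Ω)) + C₀ for all x ∈ Ω, then there exists C such that for every point w on any quasihyperbolic geodesic γ from x₀ to x, |x - w|^{1/β} ≤ C d(w, ∂Ω). -/

import Mathlib

/-!
Let `γ` be a quasihyperbolic geodesic from `x₀` to `x`, parametrized by arc length on `[0, L]`,
let `δ t = d(γ t, ∂Ω)` and let `F t` be the quasihyperbolic length of `γ` on `[0, t]`.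
Since `δ` is 1-Lipschitz, `log (δ 0 / δ t) ≤ F t`. Conversely `F t ≤ k_Ω(γ t, x₀)` because `γ` is a
geodesic, so the Hölder condition gives `δ t ≤ M e^{-β F t}` with `M = δ 0 · e^{β C₀}`. Then
`t + (M / β) e^{-β F t}` is nonincreasing (its derivative is `1 - M e^{-β F t} / δ t`), so
`|x - γ t| ≤ L - t ≤ (M / β) e^{-β F t} ≤ (M / β) (δ t / δ 0)^β`.
-/

open Metric Set MeasureTheory intervalIntegral

noncomputable section

/-- An admissible curve from `x` to `y` in `Ω`: an arc-length (1-Lipschitz)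
parametrization on `[0, L]` staying in `Ω`. -/
def IsAdmCurve {n : ℕ} (Ω : Set (EuclideanSpace ℝ (Fin n)))
    (x y : EuclideanSpace ℝ (Fin n)) (L : ℝ) (γ : ℝ → EuclideanSpace ℝ (Fin n)) : Prop :=
  0 ≤ L ∧ LipschitzOnWith 1 γ (Set.Icc 0 L) ∧ γ 0 = x ∧ γ L = y ∧
    ∀ t ∈ Set.Icc 0 L, γ t ∈ Ω

/-- Quasihyperbolic length of a curve in `Ω`. -/
def qhLength {n : ℕ} (Ω : Set (EuclideanSpace ℝ (Fin n)))
    (L : ℝ) (γ : ℝ → EuclideanSpace ℝ (Fin n)) : ℝ :=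
  ∫ t in (0:ℝ)..L, 1 / infDist (γ t) (frontier Ω)

/-- Quasihyperbolic distance in `Ω`. -/
def qhDist {n : ℕ} (Ω : Set (EuclideanSpace ℝ (Fin n)))
    (x y : EuclideanSpace ℝ (Fin n)) : ℝ :=
  sInf {d : ℝ | ∃ L γ, IsAdmCurve Ω x y L γ ∧ d = qhLength Ω L γ}


open Real

theorem infDist_frontier_pos {X : Type*} [PseudoMetricSpace X] {U : Set X} (hU : IsOpen U)
    (hfr : (frontier U).Nonempty) {z : X} (hz : z ∈ U) : 0 < infDist z (frontier U) :=
  (isClosed_frontier.notMem_iff_infDist_pos hfr).mp fun h => (hU.frontier_eq ▸ h).2 hz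

theorem LipschitzOnWith.congr {X Y : Type*} [PseudoEMetricSpace X] [PseudoEMetricSpace Y]
    {K : NNReal} {s : Set X} {f g : X → Y} (hf : LipschitzOnWith K f s) (hfg : EqOn f g s) :
    LipschitzOnWith K g s := fun x hx y hy => by
  rw [← hfg hx, ← hfg hy]
  exact hf hx hy

theorem LipschitzOnWith.comp_isometry {X Y Z : Type*} [PseudoEMetricSpace X]
    [PseudoEMetricSpace Y] [PseudoEMetricSpace Z] {K : NNReal} {s : Set X} {t : Set Y} {f : Y → Z}
    {g : X → Y} (hf : LipschitzOnWith K f t) (hg : Isometry g) (hmaps : MapsTo g s t) :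
    LipschitzOnWith K (f ∘ g) s := by
  simpa only [mul_one] using hf.comp hg.lipschitz.lipschitzOnWith hmaps

theorem LipschitzOnWith.Icc_union_Icc {X : Type*} [PseudoMetricSpace X] {f : ℝ → X} {K : NNReal}
    {a b c : ℝ} (hab : LipschitzOnWith K f (Icc a b)) (hbc : LipschitzOnWith K f (Icc b c)) :
    LipschitzOnWith K f (Icc a c) := by
  have key : ∀ s ∈ Icc a c, ∀ t ∈ Icc a c, s ≤ t → dist (f s) (f t) ≤ K * dist s t := by
    intro s hs t ht hst
    rcases le_total t b with htb | hbt
    · exact hab.dist_le_mul s ⟨hs.1, hst.trans htb⟩ t ⟨ht.1, htb⟩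
    rcases le_total b s with hbs | hsb
    · exact hbc.dist_le_mul s ⟨hbs, hs.2⟩ t ⟨hbt, ht.2⟩
    calc dist (f s) (f t) ≤ dist (f s) (f b) + dist (f b) (f t) := dist_triangle _ _ _
      _ ≤ K * dist s b + K * dist b t :=
        add_le_add (hab.dist_le_mul s ⟨hs.1, hsb⟩ b ⟨hs.1.trans hsb, le_rfl⟩)
          (hbc.dist_le_mul b ⟨le_rfl, hbt.trans ht.2⟩ t ⟨hbt, ht.2⟩)
      _ = K * dist s t := by
        simp only [Real.dist_eq]
        rw [abs_of_nonpos (by linarith), abs_of_nonpos (by linarith), abs_of_nonpos (by linarith)]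
        ring
  refine LipschitzOnWith.of_dist_le_mul fun s hs t ht => ?_
  rcases le_total s t with hst | hts
  · exact key s hs t ht hst
  · rw [dist_comm, dist_comm s]
    exact key t ht s hs hts

theorem log_div_le_integral_one_div {δ : ℝ → ℝ} {a b : ℝ} (hab : a ≤ b)
    (hδ : LipschitzOnWith 1 δ (Icc a b)) (hpos : ∀ t ∈ Icc a b, 0 < δ t) :
    log (δ a / δ b) ≤ ∫ t in a..b, 1 / δ t := by
  have hb : b ∈ Icc a b := ⟨hab, le_rfl⟩
  have hδ_le : ∀ t ∈ Icc a b, δ t ≤ δ b + (b - t) := fun t ht => by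
    have h := hδ.dist_le_mul t ht b hb
    rw [Real.dist_eq, Real.dist_eq, NNReal.coe_one, one_mul,
      abs_of_nonpos (by linarith [ht.2] : t - b ≤ 0)] at h
    linarith [le_abs_self (δ t - δ b)]
  have hpos_b := hpos b hb
  have hcomp : ∫ t in a..b, 1 / (δ b + (b - t)) = log ((δ b + (b - a)) / δ b) := by
    have h0 : (0 : ℝ) ∉ uIcc (δ b) (δ b + (b - a)) := by
      rw [uIcc_of_le (by linarith)]
      exact fun h => hpos_b.not_ge h.1
    simp_rw [← add_sub_assoc]
    rw [intervalIntegral.integral_comp_sub_left (fun s => 1 / s), add_sub_cancel_right,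
      integral_one_div (by simpa [add_sub_assoc] using h0), add_sub_assoc]
  calc log (δ a / δ b) ≤ log ((δ b + (b - a)) / δ b) := by
        gcongr
        · exact div_pos (hpos a ⟨le_rfl, hab⟩) hpos_b
        · exact hδ_le a ⟨le_rfl, hab⟩
    _ = ∫ t in a..b, 1 / (δ b + (b - t)) := hcomp.symm
    _ ≤ ∫ t in a..b, 1 / δ t := by
        refine intervalIntegral.integral_mono_on hab ?_ ?_ fun t ht =>
          one_div_le_one_div_of_le (hpos t ht) (hδ_le t ht)
        · refine ContinuousOn.intervalIntegrable fun t ht => ?_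
          rw [uIcc_of_le hab] at ht
          exact (continuousAt_const.div (by fun_prop) (by linarith [ht.2])).continuousWithinAt
        · exact (continuousOn_const.div hδ.continuousOn fun t ht =>
            (hpos t ht).ne').intervalIntegrable_of_Icc hab

theorem sub_le_mul_exp_neg_sub_exp_neg {F f : ℝ → ℝ} {u b β M : ℝ} (hβ : 0 < β) (hub : u ≤ b)
    (hF : ContinuousOn F (Icc u b)) (hF' : ∀ v ∈ Ioo u b, HasDerivAt F (f v) v)
    (hle : ∀ v ∈ Ioo u b, 1 ≤ M * exp (-β * F v) * f v) :
    b - u ≤ M / β * (exp (-β * F u) - exp (-β * F b)) := by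
  have hΦ' : ∀ v ∈ Ioo u b, HasDerivAt (fun v => v + M / β * exp (-β * F v))
      (1 - M * exp (-β * F v) * f v) v := fun v hv => by
    have h := (hasDerivAt_id' v).add (((hF' v hv).const_mul (-β)).exp.const_mul (M / β))
    refine h.congr_deriv ?_
    field_simp
    ring
  have hΦ : AntitoneOn (fun v => v + M / β * exp (-β * F v)) (Icc u b) := by
    refine antitoneOn_of_hasDerivWithinAt_nonpos (convex_Icc u b) (by fun_prop)
      (f' := fun v => 1 - M * exp (-β * F v) * f v) (fun v hv => ?_) (fun v hv => ?_) <;>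
      rw [interior_Icc] at hv
    · exact (hΦ' v hv).hasDerivWithinAt
    · linarith [hle v hv]
  have := hΦ ⟨le_rfl, hub⟩ ⟨hub, le_rfl⟩ hub
  linarith

theorem sub_le_mul_exp_neg_integral_one_div {δ : ℝ → ℝ} {a u b β M : ℝ} (hβ : 0 < β)
    (hau : a ≤ u) (hub : u ≤ b) (hδ : ContinuousOn δ (Icc a b)) (hpos : ∀ t ∈ Icc a b, 0 < δ t)
    (hle : ∀ v ∈ Icc u b, δ v ≤ M * exp (-β * ∫ t in a..v, 1 / δ t)) :
    b - u ≤ M / β * exp (-β * ∫ t in a..u, 1 / δ t) := by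
  set F : ℝ → ℝ := fun v => ∫ t in a..v, 1 / δ t
  have hint : ContinuousOn (fun t => 1 / δ t) (Icc a b) :=
    continuousOn_const.div hδ fun t ht => (hpos t ht).ne'
  have hF : ContinuousOn F (Icc a b) := by
    rw [← uIcc_of_le (hau.trans hub)] at hint ⊢
    exact intervalIntegral.continuousOn_primitive_interval' hint.intervalIntegrable left_mem_uIcc
  have hF' : ∀ v ∈ Ioo u b, HasDerivAt F (1 / δ v) v := fun v hv => by
    have hv' : v ∈ Ioo a b := ⟨hau.trans_lt hv.1, hv.2⟩
    exact intervalIntegral.integral_hasDerivAt_right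
      ((hint.mono (Icc_subset_Icc le_rfl hv'.2.le)).intervalIntegrable_of_Icc hv'.1.le)
      ((hint.mono Ioo_subset_Icc_self).stronglyMeasurableAtFilter isOpen_Ioo v hv')
      (hint.continuousAt (Icc_mem_nhds hv'.1 hv'.2))
  have hM : 0 < M :=
    pos_of_mul_pos_left ((hpos u ⟨hau, hub⟩).trans_le (hle u ⟨le_rfl, hub⟩)) (exp_pos _).le
  calc b - u ≤ M / β * (exp (-β * F u) - exp (-β * F b)) :=
        sub_le_mul_exp_neg_sub_exp_neg hβ hub (hF.mono (Icc_subset_Icc hau le_rfl)) hF'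
          fun v hv => by
            have hv' : v ∈ Icc a b := ⟨hau.trans hv.1.le, hv.2.le⟩
            rw [mul_one_div, le_div_iff₀ (hpos v hv'), one_mul]
            exact hle v (Ioo_subset_Icc_self hv)
    _ ≤ M / β * exp (-β * F u) := by
        gcongr
        linarith [exp_pos (-β * F b)]

section Curves

variable {n : ℕ} {Ω : Set (EuclideanSpace ℝ (Fin n))} {x y w : EuclideanSpace ℝ (Fin n)}
  {L L₁ L₂ v : ℝ} {γ γ₁ γ₂ : ℝ → EuclideanSpace ℝ (Fin n)}

def IsQHGeodesic (Ω : Set (EuclideanSpace ℝ (Fin n))) (x y : EuclideanSpace ℝ (Fin n)) (L : ℝ)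
    (γ : ℝ → EuclideanSpace ℝ (Fin n)) : Prop :=
  IsAdmCurve Ω x y L γ ∧ qhLength Ω L γ = qhDist Ω x y

def joinCurves (L₁ : ℝ) (γ₁ γ₂ : ℝ → EuclideanSpace ℝ (Fin n)) : ℝ → EuclideanSpace ℝ (Fin n) :=
  fun t => if t ≤ L₁ then γ₁ t else γ₂ (t - L₁)

theorem joinCurves_eqOn_left : EqOn γ₁ (joinCurves L₁ γ₁ γ₂) (Iic L₁) := fun t ht => by
  simp only [joinCurves, if_pos (show t ≤ L₁ from ht)]

theorem joinCurves_eqOn_right (h : γ₁ L₁ = γ₂ 0) :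
    EqOn (fun t => γ₂ (t - L₁)) (joinCurves L₁ γ₁ γ₂) (Ici L₁) := fun t ht => by
  rcases (show L₁ ≤ t from ht).eq_or_lt with rfl | hlt
  · simp [joinCurves, h]
  · simp [joinCurves, not_le.mpr hlt]

theorem qhLength_nonneg (hL : 0 ≤ L) : 0 ≤ qhLength Ω L γ :=
  intervalIntegral.integral_nonneg hL fun _ _ => one_div_nonneg.mpr infDist_nonneg

theorem qhDist_le_qhLength (h : IsAdmCurve Ω x y L γ) : qhDist Ω x y ≤ qhLength Ω L γ :=
  csInf_le ⟨0, by rintro _ ⟨L, γ, h, rfl⟩; exact qhLength_nonneg h.1⟩ ⟨L, γ, h, rfl⟩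

theorem qhLength_congr (hL : 0 ≤ L) (h : EqOn γ₁ γ₂ (Icc 0 L)) :
    qhLength Ω L γ₁ = qhLength Ω L γ₂ :=
  intervalIntegral.integral_congr fun t ht => by
    rw [uIcc_of_le hL] at ht
    simp only [h ht]

theorem qhLength_reverse : qhLength Ω L (fun t => γ (L - t)) = qhLength Ω L γ := by
  rw [qhLength, intervalIntegral.integral_comp_sub_left (fun t => 1 / infDist (γ t) (frontier Ω)),
    sub_self, sub_zero, qhLength]

theorem IsAdmCurve.reverse (h : IsAdmCurve Ω x y L γ) :
    IsAdmCurve Ω y x L (fun t => γ (L - t)) := by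
  obtain ⟨hL, hlip, h0, hL', hmem⟩ := h
  have hmaps : MapsTo (fun t => L - t) (Icc 0 L) (Icc 0 L) := fun t ht =>
    ⟨by linarith [ht.2], by linarith [ht.1]⟩
  refine ⟨hL, ?_, by simpa using hL', by simpa using h0, fun t ht => hmem _ (hmaps ht)⟩
  exact hlip.comp_isometry (IsometryEquiv.subLeft L).isometry hmaps

theorem IsAdmCurve.restrict (h : IsAdmCurve Ω x y L γ) (hv : v ∈ Icc 0 L) :
    IsAdmCurve Ω x (γ v) v γ := by
  obtain ⟨-, hlip, h0, -, hmem⟩ := h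
  have hsub : Icc 0 v ⊆ Icc 0 L := Icc_subset_Icc le_rfl hv.2
  exact ⟨hv.1, hlip.mono hsub, h0, rfl, fun t ht => hmem t (hsub ht)⟩

theorem IsAdmCurve.shift (h : IsAdmCurve Ω x y L γ) (hv : v ∈ Icc 0 L) :
    IsAdmCurve Ω (γ v) y (L - v) (fun t => γ (v + t)) := by
  obtain ⟨-, hlip, -, hL', hmem⟩ := h
  have hmaps : MapsTo (fun t => v + t) (Icc 0 (L - v)) (Icc 0 L) := fun t ht =>
    ⟨by linarith [hv.1, ht.1], by linarith [ht.2]⟩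
  refine ⟨by linarith [hv.2], ?_, by simp, by simpa using hL', fun t ht => hmem _ (hmaps ht)⟩
  exact hlip.comp_isometry (IsometryEquiv.addLeft v).isometry hmaps

theorem IsAdmCurve.join (h₁ : IsAdmCurve Ω x w L₁ γ₁) (h₂ : IsAdmCurve Ω w y L₂ γ₂) :
    IsAdmCurve Ω x y (L₁ + L₂) (joinCurves L₁ γ₁ γ₂) := by
  obtain ⟨hL₁, hlip₁, h₁0, h₁L, hmem₁⟩ := h₁
  obtain ⟨hL₂, hlip₂, h₂0, h₂L, hmem₂⟩ := h₂
  have hleft : EqOn γ₁ (joinCurves L₁ γ₁ γ₂) (Icc 0 L₁) :=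
    joinCurves_eqOn_left.mono Icc_subset_Iic_self
  have hright : EqOn (fun t => γ₂ (t - L₁)) (joinCurves L₁ γ₁ γ₂) (Icc L₁ (L₁ + L₂)) :=
    (joinCurves_eqOn_right (h₁L.trans h₂0.symm)).mono Icc_subset_Ici_self
  have hmaps : MapsTo (fun t => t - L₁) (Icc L₁ (L₁ + L₂)) (Icc 0 L₂) := fun t ht =>
    ⟨by linarith [ht.1], by linarith [ht.2]⟩
  refine ⟨by positivity, ?_, ?_, ?_, fun t ht => ?_⟩
  · refine (hlip₁.congr hleft).Icc_union_Icc (LipschitzOnWith.congr ?_ hright)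
    exact hlip₂.comp_isometry (IsometryEquiv.subRight L₁).isometry hmaps
  · rw [← hleft ⟨le_rfl, hL₁⟩, h₁0]
  · rw [← hright ⟨by linarith, le_rfl⟩]
    simpa using h₂L
  · rcases le_total t L₁ with htL | htL
    · rw [← hleft ⟨ht.1, htL⟩]
      exact hmem₁ t ⟨ht.1, htL⟩
    · rw [← hright ⟨htL, ht.2⟩]
      exact hmem₂ _ (hmaps ⟨htL, ht.2⟩)

theorem IsAdmCurve.continuousOn_one_div_infDist (hΩ : ∀ z ∈ Ω, 0 < infDist z (frontier Ω))
    (h : IsAdmCurve Ω x y L γ) :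
    ContinuousOn (fun t => 1 / infDist (γ t) (frontier Ω)) (Icc 0 L) :=
  continuousOn_const.div ((lipschitz_infDist_pt _).comp_lipschitzOnWith h.2.1).continuousOn
    fun t ht => (hΩ _ (h.2.2.2.2 t ht)).ne'

theorem qhLength_eq_add_shift (hΩ : ∀ z ∈ Ω, 0 < infDist z (frontier Ω))
    (h : IsAdmCurve Ω x y L γ) (hv : v ∈ Icc 0 L) :
    qhLength Ω L γ = qhLength Ω v γ + qhLength Ω (L - v) (fun t => γ (v + t)) := by
  have hint := h.continuousOn_one_div_infDist hΩ
  rw [qhLength, qhLength, qhLength, intervalIntegral.integral_comp_add_left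
    (fun t => 1 / infDist (γ t) (frontier Ω)), add_zero, add_sub_cancel,
    intervalIntegral.integral_add_adjacent_intervals]
  · exact (hint.mono (Icc_subset_Icc le_rfl hv.2)).intervalIntegrable_of_Icc hv.1
  · exact (hint.mono (Icc_subset_Icc hv.1 le_rfl)).intervalIntegrable_of_Icc hv.2

theorem qhLength_join (hΩ : ∀ z ∈ Ω, 0 < infDist z (frontier Ω))
    (h₁ : IsAdmCurve Ω x w L₁ γ₁) (h₂ : IsAdmCurve Ω w y L₂ γ₂) :
    qhLength Ω (L₁ + L₂) (joinCurves L₁ γ₁ γ₂) = qhLength Ω L₁ γ₁ + qhLength Ω L₂ γ₂ := by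
  rw [qhLength_eq_add_shift hΩ (h₁.join h₂) ⟨h₁.1, le_add_of_nonneg_right h₂.1⟩,
    add_sub_cancel_left]
  congr 1
  · exact qhLength_congr h₁.1 (joinCurves_eqOn_left.mono Icc_subset_Iic_self).symm
  · refine qhLength_congr h₂.1 fun t ht => ?_
    simpa using (joinCurves_eqOn_right (h₁.2.2.2.1.trans h₂.2.2.1.symm)
      (show L₁ ≤ L₁ + t by linarith [ht.1])).symm

/-- Replacing the initial arc of a geodesic by a curve with the same endpoints gives a competitor
for the whole geodesic. -/
theorem IsQHGeodesic.qhLength_le_qhDist (hΩ : ∀ z ∈ Ω, 0 < infDist z (frontier Ω))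
    (hγ : IsQHGeodesic Ω x y L γ) (hv : v ∈ Icc 0 L) :
    qhLength Ω v γ ≤ qhDist Ω (γ v) x := by
  obtain ⟨h, hgeo⟩ := hγ
  refine le_csInf ⟨_, v, _, (h.restrict hv).reverse, rfl⟩ ?_
  rintro _ ⟨L', σ, hσ, rfl⟩
  have hcomp := qhDist_le_qhLength (hσ.reverse.join (h.shift hv))
  rw [qhLength_join hΩ hσ.reverse (h.shift hv), qhLength_reverse, ← hgeo,
    qhLength_eq_add_shift hΩ h hv] at hcomp
  linarith

end Curves

section John

variable {n : ℕ} {Ω : Set (EuclideanSpace ℝ (Fin n))} {x₀ x : EuclideanSpace ℝ (Fin n)}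
  {L u β C₀ : ℝ} {γ : ℝ → EuclideanSpace ℝ (Fin n)}

theorem IsQHGeodesic.infDist_le_mul_exp (hΩ : ∀ z ∈ Ω, 0 < infDist z (frontier Ω)) (hβ : 0 < β)
    (hHolder : ∀ z ∈ Ω,
      qhDist Ω z x₀ ≤ 1 / β * log (infDist x₀ (frontier Ω) / infDist z (frontier Ω)) + C₀)
    (hγ : IsQHGeodesic Ω x₀ x L γ) (hu : u ∈ Icc 0 L) :
    infDist (γ u) (frontier Ω) ≤
      infDist x₀ (frontier Ω) * exp (β * C₀) * exp (-β * qhLength Ω u γ) := by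
  have hF := (hγ.qhLength_le_qhDist hΩ hu).trans (hHolder _ (hγ.1.2.2.2.2 u hu))
  obtain ⟨⟨hL, -, h0, -, hmem⟩, -⟩ := hγ
  have hd₀ : 0 < infDist x₀ (frontier Ω) := h0 ▸ hΩ _ (hmem 0 ⟨le_rfl, hL⟩)
  have hδ : 0 < infDist (γ u) (frontier Ω) := hΩ _ (hmem u hu)
  rw [log_div hd₀.ne' hδ.ne'] at hF
  have : log (infDist (γ u) (frontier Ω)) ≤
      log (infDist x₀ (frontier Ω)) + β * C₀ + -β * qhLength Ω u γ := by
    field_simp at hF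
    nlinarith
  calc infDist (γ u) (frontier Ω) = exp (log (infDist (γ u) (frontier Ω))) := (exp_log hδ).symm
    _ ≤ exp (log (infDist x₀ (frontier Ω)) + β * C₀ + -β * qhLength Ω u γ) := exp_le_exp.mpr this
    _ = _ := by rw [exp_add, exp_add, exp_log hd₀]

theorem IsQHGeodesic.dist_le_mul_rpow (hΩ : ∀ z ∈ Ω, 0 < infDist z (frontier Ω)) (hβ : 0 < β)
    (hHolder : ∀ z ∈ Ω,
      qhDist Ω z x₀ ≤ 1 / β * log (infDist x₀ (frontier Ω) / infDist z (frontier Ω)) + C₀)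
    (hγ : IsQHGeodesic Ω x₀ x L γ) (hu : u ∈ Icc 0 L) :
    dist x (γ u) ≤ infDist x₀ (frontier Ω) * exp (β * C₀) / β *
      (infDist (γ u) (frontier Ω) / infDist x₀ (frontier Ω)) ^ β := by
  obtain ⟨hL, hlip, h0, hL', hmem⟩ := hγ.1
  set δ : ℝ → ℝ := fun t => infDist (γ t) (frontier Ω)
  have hδ : LipschitzOnWith 1 δ (Icc 0 L) :=
    (one_mul (1 : NNReal)) ▸ (lipschitz_infDist_pt _).comp_lipschitzOnWith hlip
  have hpos : ∀ t ∈ Icc 0 L, 0 < δ t := fun t ht => hΩ _ (hmem t ht)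
  have hδ0 : δ 0 = infDist x₀ (frontier Ω) := by simp only [δ, h0]
  have hlog : log (δ 0 / δ u) ≤ qhLength Ω u γ :=
    log_div_le_integral_one_div hu.1 (hδ.mono (Icc_subset_Icc le_rfl hu.2))
      fun t ht => hpos t ⟨ht.1, ht.2.trans hu.2⟩
  rw [hδ0] at hlog
  calc dist x (γ u) ≤ L - u := by
        simpa [← hL', Real.dist_eq, abs_of_nonneg (sub_nonneg.mpr hu.2)]
          using hlip.dist_le_mul L ⟨hL, le_rfl⟩ u hu
    _ ≤ infDist x₀ (frontier Ω) * exp (β * C₀) / β * exp (-β * qhLength Ω u γ) :=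
        sub_le_mul_exp_neg_integral_one_div hβ hu.1 hu.2 hδ.continuousOn hpos
          fun v hv => hγ.infDist_le_mul_exp hΩ hβ hHolder ⟨hu.1.trans hv.1, hv.2⟩
    _ ≤ infDist x₀ (frontier Ω) * exp (β * C₀) / β * (δ u / infDist x₀ (frontier Ω)) ^ β := by
        have hd₀ : 0 < infDist x₀ (frontier Ω) := hδ0 ▸ hpos 0 ⟨le_rfl, hL⟩
        gcongr
        rw [rpow_def_of_pos (div_pos (hpos u hu) hd₀), ← inv_div, log_inv]
        exact exp_le_exp.mpr (by nlinarith)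

end John

theorem stmt_11_general {n : ℕ} (Ω : Set (EuclideanSpace ℝ (Fin n)))
    (hΩopen : IsOpen Ω) (hΩbdd : Bornology.IsBounded Ω)
    (β : ℝ) (hβ0 : 0 < β)
    (x₀ : EuclideanSpace ℝ (Fin n)) (hx₀ : x₀ ∈ Ω) (C₀ : ℝ)
    (hHolder : ∀ x ∈ Ω,
      qhDist Ω x x₀ ≤ (1 / β) * Real.log (infDist x₀ (frontier Ω) / infDist x (frontier Ω)) + C₀) :
    ∃ C : ℝ, 0 < C ∧ ∀ x ∈ Ω, ∀ (L : ℝ) (γ : ℝ → EuclideanSpace ℝ (Fin n)),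
      IsAdmCurve Ω x₀ x L γ → qhLength Ω L γ = qhDist Ω x₀ x →
      ∀ t ∈ Set.Icc 0 L, dist x (γ t) ^ (1 / β) ≤ C * infDist (γ t) (frontier Ω) := by
  rcases subsingleton_or_nontrivial (EuclideanSpace ℝ (Fin n)) with hE | hE
  · refine ⟨1, one_pos, fun x _ L γ _ _ t _ => ?_⟩
    rw [Subsingleton.elim x (γ t), dist_self, zero_rpow (by positivity), one_mul]
    exact infDist_nonneg
  have hfr : (frontier Ω).Nonempty := nonempty_frontier_iff.mpr
    ⟨⟨x₀, hx₀⟩, fun h => NormedSpace.unbounded_univ ℝ _ (h ▸ hΩbdd)⟩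
  have hΩ : ∀ z ∈ Ω, 0 < infDist z (frontier Ω) := fun z => infDist_frontier_pos hΩopen hfr
  set d₀ := infDist x₀ (frontier Ω)
  have hd₀ : 0 < d₀ := hΩ x₀ hx₀
  set K := d₀ * exp (β * C₀) / β
  have hK : 0 < K := by positivity
  refine ⟨K ^ (1 / β) / d₀, by positivity, fun x _ L γ hadm hgeo t ht => ?_⟩
  have hδ : 0 ≤ infDist (γ t) (frontier Ω) / d₀ := div_nonneg infDist_nonneg hd₀.le
  calc dist x (γ t) ^ (1 / β) ≤ (K * (infDist (γ t) (frontier Ω) / d₀) ^ β) ^ (1 / β) :=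
        rpow_le_rpow dist_nonneg (IsQHGeodesic.dist_le_mul_rpow hΩ hβ0 hHolder ⟨hadm, hgeo⟩ ht)
          (by positivity)
    _ = K ^ (1 / β) * (infDist (γ t) (frontier Ω) / d₀) := by
        rw [mul_rpow hK.le (by positivity), ← rpow_mul hδ, mul_one_div_cancel hβ0.ne',
          rpow_one]
    _ = K ^ (1 / β) / d₀ * infDist (γ t) (frontier Ω) := by ring

/-- every β-Hölder domain is a (1/β)-John domain along
quasihyperbolic geodesics. -/
theorem stmt_11 {n : ℕ} (hn : 2 ≤ n) (Ω : Set (EuclideanSpace ℝ (Fin n)))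
    (hΩopen : IsOpen Ω) (hΩconn : IsConnected Ω) (hΩbdd : Bornology.IsBounded Ω)
    (β : ℝ) (hβ0 : 0 < β) (hβ1 : β ≤ 1)
    (x₀ : EuclideanSpace ℝ (Fin n)) (hx₀ : x₀ ∈ Ω) (C₀ : ℝ)
    (hHolder : ∀ x ∈ Ω,
      qhDist Ω x x₀ ≤ (1 / β) * Real.log (infDist x₀ (frontier Ω) / infDist x (frontier Ω)) + C₀) :
    ∃ C : ℝ, 0 < C ∧ ∀ x ∈ Ω, ∀ (L : ℝ) (γ : ℝ → EuclideanSpace ℝ (Fin n)),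
      IsAdmCurve Ω x₀ x L γ → qhLength Ω L γ = qhDist Ω x₀ x →
      ∀ t ∈ Set.Icc 0 L, dist x (γ t) ^ (1 / β) ≤ C * infDist (γ t) (frontier Ω) :=
  stmt_11_general Ω hΩopen hΩbdd β hβ0 x₀ hx₀ C₀ hHolder
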